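/- arXiv:1812.04499 — 6 statements merged into one kernel-verified Lean document; each statement's English description precedes it below -/
import Mathlib

section
/- Representation formula with three imaginary units: Let f = I(F) be a slice function on the circular set Ω_D ⊆ ℍⁿ. Then for all I, J, K ∈ 𝕊 with J ≠ K and all α, β ∈ ℝⁿ with α + iβ ∈ D, one has f(α + βI) = (I − K)·((J − K)⁻¹·f(α + βJ)) − (I − J)·((J − K)⁻¹·f(α + βK)), where all products and inverses are taken in the quaternions. -/
/-! On a fixed slice `α + βJ` the slice function is `J ↦ A + J * B` with `A = F₁ (α + iβ)` and
`B = F₂ (α + iβ)`, an affine function of the unit. An affine function on a division ring is recovered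
from its values at two distinct points `J ≠ K` by a noncommutative Lagrange interpolation formula. -/

/-- The sphere of quaternionic imaginary units. -/
def Sphere : Set (Quaternion ℝ) := {J | J * J = -1}

/-- The point `α + iβ ∈ ℂⁿ`. -/
noncomputable def cpt {n : ℕ} (α β : Fin n → ℝ) : Fin n → ℂ :=
  fun t => (α t : ℂ) + (β t : ℂ) * Complex.I

/-- The point `α + βJ ∈ ℍⁿ`. -/
noncomputable def qpt {n : ℕ} (α β : Fin n → ℝ) (J : Quaternion ℝ) : Fin n → Quaternion ℝ :=
  fun t => (α t : Quaternion ℝ) + (β t : Quaternion ℝ) * J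

/-- Componentwise complex conjugation on `ℂⁿ`. -/
def conjPt {n : ℕ} (z : Fin n → ℂ) : Fin n → ℂ := fun t => (starRingEnd ℂ) (z t)

lemma add_mul_eq_interpolation_of_ne {R : Type*} [DivisionRing R] {J K : R} (hJK : J ≠ K)
    (I A B : R) :
    A + I * B = (I - K) * ((J - K)⁻¹ * (A + J * B)) - (I - J) * ((J - K)⁻¹ * (A + K * B)) := by
  have hu : J - K ≠ 0 := sub_ne_zero.mpr hJK
  set v := (J - K)⁻¹ with hv
  symm
  -- split `I - J = (I - K) - (J - K)`
  calc (I - K) * (v * (A + J * B)) - (I - J) * (v * (A + K * B))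
      = (I - K) * (v * ((A + J * B) - (A + K * B))) + (J - K) * v * (A + K * B) := by
        noncomm_ring
    _ = (I - K) * B + (A + K * B) := by
        rw [show (A + J * B) - (A + K * B) = (J - K) * B by noncomm_ring, ← mul_assoc v,
          hv, inv_mul_cancel₀ hu, mul_inv_cancel₀ hu, one_mul, one_mul]
    _ = A + I * B := by noncomm_ring

theorem representation_formula_three_units_general {n : ℕ} (D : Set (Fin n → ℂ))
    (F₁ F₂ : (Fin n → ℂ) → Quaternion ℝ)
    (f : (Fin n → Quaternion ℝ) → Quaternion ℝ)
    (hf : ∀ J ∈ Sphere, ∀ α β : Fin n → ℝ, cpt α β ∈ D →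
      f (qpt α β J) = F₁ (cpt α β) + J * F₂ (cpt α β))
    (I J K : Quaternion ℝ) (hI : I ∈ Sphere) (hJ : J ∈ Sphere) (hK : K ∈ Sphere)
    (hJK : J ≠ K) (α β : Fin n → ℝ) (hz : cpt α β ∈ D) :
    f (qpt α β I) = (I - K) * ((J - K)⁻¹ * f (qpt α β J))
      - (I - J) * ((J - K)⁻¹ * f (qpt α β K)) := by
  rw [hf I hI α β hz, hf J hJ α β hz, hf K hK α β hz]
  exact add_mul_eq_interpolation_of_ne hJK I _ _

/-- Representation formula with three imaginary units. -/
theorem representation_formula_three_units {n : ℕ} (D : Set (Fin n → ℂ)) (hD : IsOpen D)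
    (hDconj : ∀ z ∈ D, conjPt z ∈ D)
    (F₁ F₂ : (Fin n → ℂ) → Quaternion ℝ)
    (hF₁ : ∀ z ∈ D, F₁ (conjPt z) = F₁ z)
    (hF₂ : ∀ z ∈ D, F₂ (conjPt z) = - F₂ z)
    (f : (Fin n → Quaternion ℝ) → Quaternion ℝ)
    (hf : ∀ J ∈ Sphere, ∀ α β : Fin n → ℝ, cpt α β ∈ D →
      f (qpt α β J) = F₁ (cpt α β) + J * F₂ (cpt α β))
    (I J K : Quaternion ℝ) (hI : I ∈ Sphere) (hJ : J ∈ Sphere) (hK : K ∈ Sphere)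
    (hJK : J ≠ K) (α β : Fin n → ℝ) (hz : cpt α β ∈ D) :
    f (qpt α β I) = (I - K) * ((J - K)⁻¹ * f (qpt α β J))
      - (I - J) * ((J - K)⁻¹ * f (qpt α β K)) :=
  representation_formula_three_units_general D F₁ F₂ f hf I J K hI hJ hK hJK α β hz
end

section
/- Characterization of slice regularity by slice restrictions: Let F = (F₁, F₂) be a quaternionic stem function of class C¹ on D and f = I(F) the induced slice function on Ω_D. Then F is holomorphic (i.e. f is slice regular) if and only if for every J ∈ 𝕊 the restriction f_J of f to D_J := Ω_D ∩ ℂ_Jⁿ is holomorphic with respect to J, meaning that for each t = 1, …, n and every point α + βJ ∈ D_J one has (∂/∂α_t) f_J(α + βJ) + J·(∂/∂β_t) f_J(α + βJ) = 0. -/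
open Quaternion

lemma neg_mem_Sphere {J : ℍ[ℝ]} (hJ : J ∈ Sphere) : -J ∈ Sphere :=
  (neg_mul_neg J J).trans hJ

lemma mk_zero_one_zero_zero_mem_Sphere : (⟨0, 1, 0, 0⟩ : ℍ[ℝ]) ∈ Sphere := by
  show (⟨0, 1, 0, 0⟩ : ℍ[ℝ]) * ⟨0, 1, 0, 0⟩ = -1
  ext <;> simp

lemma add_mul_add_mul_add_mul {R : Type*} [Ring R] {J : R} (hJ : J * J = -1) (a b c d : R) :
    a + J * b + J * (c + J * d) = (a - d) + J * (b + c) := by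
  rw [mul_add, ← mul_assoc, hJ, mul_add]
  noncomm_ring

lemma forall_mem_Sphere_add_mul_eq_zero_iff (u v : ℍ[ℝ]) :
    (∀ J ∈ Sphere, u + J * v = 0) ↔ u = 0 ∧ v = 0 := by
  refine ⟨fun h => ?_, fun ⟨hu, hv⟩ J _ => by simp [hu, hv]⟩
  set J : ℍ[ℝ] := ⟨0, 1, 0, 0⟩
  have hJ : J ∈ Sphere := mk_zero_one_zero_zero_mem_Sphere
  have hplus := h J hJ
  have hminus := h (-J) (neg_mem_Sphere hJ)
  have hu : u = 0 := by
    have h2u : (2 : ℝ) • u = 0 := by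
      rw [two_smul]
      calc u + u = (u + J * v) + (u + -J * v) := by noncomm_ring
        _ = 0 := by rw [hplus, hminus, add_zero]
    exact (smul_eq_zero.mp h2u).resolve_left two_ne_zero
  have hJv : J * v = 0 := by simpa [hu] using hplus
  refine ⟨hu, ?_⟩
  calc v = -(J * J) * v := by rw [show J * J = -1 from hJ, neg_neg, one_mul]
    _ = 0 := by rw [neg_mul, mul_assoc, hJv, mul_zero, neg_zero]

lemma fderiv_add_const_mul_apply {E : Type*} [NormedAddCommGroup E] [NormedSpace ℝ E]
    {f g : E → ℍ[ℝ]} {z : E} (hf : DifferentiableAt ℝ f z) (hg : DifferentiableAt ℝ g z)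
    (J : ℍ[ℝ]) (v : E) :
    fderiv ℝ (fun w => f w + J * g w) z v = fderiv ℝ f z v + J * fderiv ℝ g z v := by
  rw [fderiv_fun_add hf (hg.const_mul J), fderiv_const_mul hg J]
  rfl

theorem slice_regular_iff_slices_holomorphic_general {n : ℕ} (D : Set (Fin n → ℂ)) (hD : IsOpen D)
    (F₁ F₂ : (Fin n → ℂ) → Quaternion ℝ)
    (hF₁C : ContDiffOn ℝ 1 F₁ D) (hF₂C : ContDiffOn ℝ 1 F₂ D) :
    (∀ t : Fin n, ∀ z ∈ D,
        fderiv ℝ F₁ z (Pi.single t 1) = fderiv ℝ F₂ z (Pi.single t Complex.I) ∧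
        fderiv ℝ F₁ z (Pi.single t Complex.I) = - fderiv ℝ F₂ z (Pi.single t 1)) ↔
    (∀ J ∈ Sphere, ∀ t : Fin n, ∀ z ∈ D,
        fderiv ℝ (fun w => F₁ w + J * F₂ w) z (Pi.single t 1)
          + J * fderiv ℝ (fun w => F₁ w + J * F₂ w) z (Pi.single t Complex.I) = 0) := by
  have pointwise : ∀ t : Fin n, ∀ z ∈ D,
      (fderiv ℝ F₁ z (Pi.single t 1) = fderiv ℝ F₂ z (Pi.single t Complex.I) ∧
        fderiv ℝ F₁ z (Pi.single t Complex.I) = - fderiv ℝ F₂ z (Pi.single t 1)) ↔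
      ∀ J ∈ Sphere, fderiv ℝ (fun w => F₁ w + J * F₂ w) z (Pi.single t 1)
          + J * fderiv ℝ (fun w => F₁ w + J * F₂ w) z (Pi.single t Complex.I) = 0 := by
    intro t z hz
    have hF₁ := (hF₁C.differentiableOn one_ne_zero).differentiableAt (hD.mem_nhds hz)
    have hF₂ := (hF₂C.differentiableOn one_ne_zero).differentiableAt (hD.mem_nhds hz)
    simp only [fderiv_add_const_mul_apply hF₁ hF₂]
    rw [forall₂_congr fun J hJ => by rw [add_mul_add_mul_add_mul hJ],
      forall_mem_Sphere_add_mul_eq_zero_iff, sub_eq_zero, add_eq_zero_iff_eq_neg']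
  exact ⟨fun h J hJ t z hz => (pointwise t z hz).1 (h t z hz) J hJ,
    fun h t z hz => (pointwise t z hz).2 fun J hJ => h J hJ t z hz⟩

/-- Characterization of slice regularity by holomorphy of all slice restrictions. -/
theorem slice_regular_iff_slices_holomorphic {n : ℕ} (D : Set (Fin n → ℂ)) (hD : IsOpen D)
    (hDconj : ∀ z ∈ D, conjPt z ∈ D)
    (F₁ F₂ : (Fin n → ℂ) → Quaternion ℝ)
    (hF₁ : ∀ z ∈ D, F₁ (conjPt z) = F₁ z)
    (hF₂ : ∀ z ∈ D, F₂ (conjPt z) = - F₂ z)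
    (hF₁C : ContDiffOn ℝ 1 F₁ D) (hF₂C : ContDiffOn ℝ 1 F₂ D) :
    (∀ t : Fin n, ∀ z ∈ D,
        fderiv ℝ F₁ z (Pi.single t 1) = fderiv ℝ F₂ z (Pi.single t Complex.I) ∧
        fderiv ℝ F₁ z (Pi.single t Complex.I) = - fderiv ℝ F₂ z (Pi.single t 1)) ↔
    (∀ J ∈ Sphere, ∀ t : Fin n, ∀ z ∈ D,
        fderiv ℝ (fun w => F₁ w + J * F₂ w) z (Pi.single t 1)
          + J * fderiv ℝ (fun w => F₁ w + J * F₂ w) z (Pi.single t Complex.I) = 0) :=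
  slice_regular_iff_slices_holomorphic_general D hD F₁ F₂ hF₁C hF₂C
end

section
/- Two holomorphic slices suffice for slice regularity: Let F = (F₁, F₂) be a quaternionic stem function of class C¹ on D and f = I(F) the induced slice function on Ω_D. If there exist J, K ∈ 𝕊 with J ≠ K (the case K = −J being allowed) such that the restrictions f_J : D_J → ℍ and f_K : D_K → ℍ are holomorphic, i.e. (∂/∂α_t) f_J + J·(∂/∂β_t) f_J = 0 on D_J and (∂/∂α_t) f_K + K·(∂/∂β_t) f_K = 0 on D_K for each t = 1, …, n, then F is holomorphic and f is slice regular. -/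
/-!
Write `f_L = F₁ + L F₂` and let `a, b, c, e` be the derivatives of `F₁, F₁, F₂, F₂` in the
directions `α_t, β_t, α_t, β_t`. Since `L² = -1`, the Cauchy–Riemann operator of the slice `f_L`
is `(a + L c) + L (b + L e) = (a - e) + L (b + c)`. If it vanishes for two distinct units `J, K`,
subtracting gives `(J - K)(b + c) = 0`; as `ℍ` has no zero divisors, `b + c = 0` and then
`a - e = 0`, which are the Cauchy–Riemann equations of the stem function.
-/

section ImaginaryUnit

variable {R : Type*} [Ring R]

theorem add_mul_add_mul_add_mul_eq_of_mul_self_eq_neg_one {L : R} (hL : L * L = -1)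
    (a b c e : R) : a + L * c + L * (b + L * e) = a - e + L * (b + c) := by
  rw [mul_add L b, ← mul_assoc, hL]
  noncomm_ring

theorem eq_zero_of_add_mul_eq_zero_of_add_mul_eq_zero [NoZeroDivisors R] {J K x y : R}
    (hJK : J ≠ K) (hJ : x + J * y = 0) (hK : x + K * y = 0) : x = 0 ∧ y = 0 := by
  have hy : (J - K) * y = 0 := by
    rw [sub_mul, ← add_sub_add_left_eq_sub (J * y) (K * y) x, hJ, hK, sub_self]
  have hy : y = 0 := (mul_eq_zero.mp hy).resolve_left (sub_ne_zero.mpr hJK)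
  rw [hy, mul_zero, add_zero] at hJ
  exact ⟨hJ, hy⟩

end ImaginaryUnit

theorem fderiv_add_const_mul {𝕜 E 𝔸 : Type*} [NontriviallyNormedField 𝕜] [NormedAddCommGroup E]
    [NormedSpace 𝕜 E] [NormedRing 𝔸] [NormedAlgebra 𝕜 𝔸] {f g : E → 𝔸} {z : E}
    (hf : DifferentiableAt 𝕜 f z) (hg : DifferentiableAt 𝕜 g z) (L : 𝔸) (v : E) :
    fderiv 𝕜 (fun w => f w + L * g w) z v = fderiv 𝕜 f z v + L * fderiv 𝕜 g z v := by
  rw [fderiv_fun_add hf (hg.const_mul L), fderiv_const_mul hg L]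
  rfl

theorem slice_regular_of_two_holomorphic_slices_general {n : ℕ} (D : Set (Fin n → ℂ)) (hD : IsOpen D)
    (F₁ F₂ : (Fin n → ℂ) → Quaternion ℝ)
    (hF₁C : ContDiffOn ℝ 1 F₁ D) (hF₂C : ContDiffOn ℝ 1 F₂ D)
    (J K : Quaternion ℝ) (hJ : J ∈ Sphere) (hK : K ∈ Sphere) (hJK : J ≠ K)
    (hfJ : ∀ t : Fin n, ∀ z ∈ D,
        fderiv ℝ (fun w => F₁ w + J * F₂ w) z (Pi.single t 1)
          + J * fderiv ℝ (fun w => F₁ w + J * F₂ w) z (Pi.single t Complex.I) = 0)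
    (hfK : ∀ t : Fin n, ∀ z ∈ D,
        fderiv ℝ (fun w => F₁ w + K * F₂ w) z (Pi.single t 1)
          + K * fderiv ℝ (fun w => F₁ w + K * F₂ w) z (Pi.single t Complex.I) = 0) :
    ∀ t : Fin n, ∀ z ∈ D,
        fderiv ℝ F₁ z (Pi.single t 1) = fderiv ℝ F₂ z (Pi.single t Complex.I) ∧
        fderiv ℝ F₁ z (Pi.single t Complex.I) = - fderiv ℝ F₂ z (Pi.single t 1) := by
  intro t z hz
  have hF₁ : DifferentiableAt ℝ F₁ z :=
    (hF₁C.differentiableOn one_ne_zero z hz).differentiableAt (hD.mem_nhds hz)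
  have hF₂ : DifferentiableAt ℝ F₂ z :=
    (hF₂C.differentiableOn one_ne_zero z hz).differentiableAt (hD.mem_nhds hz)
  have hslice : ∀ L : Quaternion ℝ, L * L = -1 →
      fderiv ℝ (fun w => F₁ w + L * F₂ w) z (Pi.single t 1)
        + L * fderiv ℝ (fun w => F₁ w + L * F₂ w) z (Pi.single t Complex.I) = 0 →
      fderiv ℝ F₁ z (Pi.single t 1) - fderiv ℝ F₂ z (Pi.single t Complex.I)
        + L * (fderiv ℝ F₁ z (Pi.single t Complex.I) + fderiv ℝ F₂ z (Pi.single t 1)) = 0 := by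
    intro L hL h
    rwa [fderiv_add_const_mul hF₁ hF₂, fderiv_add_const_mul hF₁ hF₂,
      add_mul_add_mul_add_mul_eq_of_mul_self_eq_neg_one hL] at h
  obtain ⟨hae, hbc⟩ := eq_zero_of_add_mul_eq_zero_of_add_mul_eq_zero hJK
    (hslice J hJ (hfJ t z hz)) (hslice K hK (hfK t z hz))
  exact ⟨sub_eq_zero.mp hae, eq_neg_of_add_eq_zero_left hbc⟩

/-- Two holomorphic slices suffice for slice regularity. -/
theorem slice_regular_of_two_holomorphic_slices {n : ℕ} (D : Set (Fin n → ℂ)) (hD : IsOpen D)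
    (hDconj : ∀ z ∈ D, conjPt z ∈ D)
    (F₁ F₂ : (Fin n → ℂ) → Quaternion ℝ)
    (hF₁ : ∀ z ∈ D, F₁ (conjPt z) = F₁ z)
    (hF₂ : ∀ z ∈ D, F₂ (conjPt z) = - F₂ z)
    (hF₁C : ContDiffOn ℝ 1 F₁ D) (hF₂C : ContDiffOn ℝ 1 F₂ D)
    (J K : Quaternion ℝ) (hJ : J ∈ Sphere) (hK : K ∈ Sphere) (hJK : J ≠ K)
    (hfJ : ∀ t : Fin n, ∀ z ∈ D,
        fderiv ℝ (fun w => F₁ w + J * F₂ w) z (Pi.single t 1)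
          + J * fderiv ℝ (fun w => F₁ w + J * F₂ w) z (Pi.single t Complex.I) = 0)
    (hfK : ∀ t : Fin n, ∀ z ∈ D,
        fderiv ℝ (fun w => F₁ w + K * F₂ w) z (Pi.single t 1)
          + K * fderiv ℝ (fun w => F₁ w + K * F₂ w) z (Pi.single t Complex.I) = 0) :
    ∀ t : Fin n, ∀ z ∈ D,
        fderiv ℝ F₁ z (Pi.single t 1) = fderiv ℝ F₂ z (Pi.single t Complex.I) ∧
        fderiv ℝ F₁ z (Pi.single t Complex.I) = - fderiv ℝ F₂ z (Pi.single t 1) :=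
  slice_regular_of_two_holomorphic_slices_general D hD F₁ F₂ hF₁C hF₂C J K hJ hK hJK hfJ hfK
end

section
/- Characterization of real slice functions: Let F = (F₁, F₂) be a quaternionic stem function on D and f = I(F) the induced slice function on Ω_D. Then F₁ and F₂ are real valued (i.e. F₁(z), F₂(z) ∈ ℝ·1 ⊆ ℍ for all z ∈ D) if and only if for every J ∈ 𝕊 the restriction f_J maps D_J := Ω_D ∩ ℂ_Jⁿ into ℂ_J. -/
/-! Testing `p + Jq ∈ ℂ_J` at `J = i, j, k` gives six linear relations between the imaginary
coordinates of `p` and `q`, and together they force all of them to vanish. -/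

open Quaternion

def quatI : ℍ[ℝ] := ⟨0, 1, 0, 0⟩

def quatJ : ℍ[ℝ] := ⟨0, 0, 1, 0⟩

def quatK : ℍ[ℝ] := ⟨0, 0, 0, 1⟩

lemma quatI_mem_sphere : quatI ∈ Sphere := by
  show quatI * quatI = -1
  ext <;> simp <;> simp [quatI]

lemma quatJ_mem_sphere : quatJ ∈ Sphere := by
  show quatJ * quatJ = -1
  ext <;> simp <;> simp [quatJ]

lemma quatK_mem_sphere : quatK ∈ Sphere := by
  show quatK * quatK = -1
  ext <;> simp <;> simp [quatK]

lemma exists_coe_of_forall_mem_sphere {p q : ℍ[ℝ]}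
    (h : ∀ J ∈ Sphere, ∃ a b : ℝ, p + J * q = a + b * J) :
    (∃ r : ℝ, p = r) ∧ ∃ s : ℝ, q = s := by
  obtain ⟨_, _, hi⟩ := h _ quatI_mem_sphere
  obtain ⟨_, _, hj⟩ := h _ quatJ_mem_sphere
  obtain ⟨_, _, hk⟩ := h _ quatK_mem_sphere
  simp only [Quaternion.ext_iff, re_add, imI_add, imJ_add, imK_add, re_mul, imI_mul, imJ_mul,
    imK_mul, re_coe, imI_coe, imJ_coe, imK_coe] at hi hj hk
  dsimp only [quatI, quatJ, quatK] at hi hj hk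
  exact ⟨⟨p.re, by ext <;> simp <;> linarith⟩, ⟨q.re, by ext <;> simp <;> linarith⟩⟩

lemma cpt_re_im {n : ℕ} (z : Fin n → ℂ) : cpt (fun t => (z t).re) (fun t => (z t).im) = z :=
  funext fun t => Complex.re_add_im (z t)

theorem real_slice_function_iff_general {n : ℕ} (D : Set (Fin n → ℂ))
    (F₁ F₂ : (Fin n → ℂ) → Quaternion ℝ) :
    (∀ z ∈ D, (∃ r : ℝ, F₁ z = (r : Quaternion ℝ)) ∧ (∃ s : ℝ, F₂ z = (s : Quaternion ℝ))) ↔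
    (∀ J ∈ Sphere, ∀ α β : Fin n → ℝ, cpt α β ∈ D →
      ∃ a b : ℝ, F₁ (cpt α β) + J * F₂ (cpt α β)
        = (a : Quaternion ℝ) + (b : Quaternion ℝ) * J) := by
  constructor
  · rintro h J - α β hz
    obtain ⟨⟨r, hr⟩, ⟨s, hs⟩⟩ := h _ hz
    exact ⟨r, s, by rw [hr, hs, coe_commutes]⟩
  · intro h z hz
    rw [← cpt_re_im z] at hz ⊢
    exact exists_coe_of_forall_mem_sphere fun J hJ => h J hJ _ _ hz

/-- Characterization of real slice functions: the stem components are real valued iff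
every slice restriction `f_J` maps `D_J` into `ℂ_J`. -/
theorem real_slice_function_iff {n : ℕ} (D : Set (Fin n → ℂ)) (hD : IsOpen D)
    (hDconj : ∀ z ∈ D, conjPt z ∈ D)
    (F₁ F₂ : (Fin n → ℂ) → Quaternion ℝ)
    (hF₁ : ∀ z ∈ D, F₁ (conjPt z) = F₁ z)
    (hF₂ : ∀ z ∈ D, F₂ (conjPt z) = - F₂ z) :
    (∀ z ∈ D, (∃ r : ℝ, F₁ z = (r : Quaternion ℝ)) ∧ (∃ s : ℝ, F₂ z = (s : Quaternion ℝ))) ↔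
    (∀ J ∈ Sphere, ∀ α β : Fin n → ℝ, cpt α β ∈ D →
      ∃ a b : ℝ, F₁ (cpt α β) + J * F₂ (cpt α β)
        = (a : Quaternion ℝ) + (b : Quaternion ℝ) * J) :=
  real_slice_function_iff_general D F₁ F₂
end

section
/- Slice product of polynomials is the star product: Let a, b : ℕⁿ → ℍ be finitely supported coefficient families, and let F, G be the stem functions on ℂⁿ given by F(z) = Σ_μ z^μ a_μ and G(z) = Σ_ν z^ν b_ν, where z^μ := z₁^{μ₁}⋯zₙ^{μₙ} ∈ ℂ acts on ℍ via the real-algebra splitting z^μ = A_μ(z) + i B_μ(z) with A_μ, B_μ real (so F₁(z) = Σ_μ A_μ(z) a_μ, F₂(z) = Σ_μ B_μ(z) a_μ, and similarly for G). Then the slice product satisfies, for every J ∈ 𝕊 and α, β ∈ ℝⁿ with x = α + βJ, I(FG)(x) = Σ_γ x^γ c_γ, where c_γ := Σ_{μ+ν=γ} a_μ b_ν and x^γ := x₁^{γ₁}⋯xₙ^{γₙ} computed in ℍ (all components xₜ lie in the commutative subalgebra ℂ_J). -/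
open Pointwise

/-- Slice product of polynomials is the star product. -/
theorem slice_product_of_polynomials_eq_star_product {n : ℕ}
    (a b : (Fin n → ℕ) → Quaternion ℝ)
    (ha : (Function.support a).Finite) (hb : (Function.support b).Finite)
    (J : Quaternion ℝ) (hJ : J ∈ Sphere) (α β : Fin n → ℝ) :
    ((∑ᶠ μ : Fin n → ℕ, (((∏ t, cpt α β t ^ μ t).re : ℝ) : Quaternion ℝ) * a μ) *
        (∑ᶠ ν : Fin n → ℕ, (((∏ t, cpt α β t ^ ν t).re : ℝ) : Quaternion ℝ) * b ν) -
      (∑ᶠ μ : Fin n → ℕ, (((∏ t, cpt α β t ^ μ t).im : ℝ) : Quaternion ℝ) * a μ) *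
        (∑ᶠ ν : Fin n → ℕ, (((∏ t, cpt α β t ^ ν t).im : ℝ) : Quaternion ℝ) * b ν))
    + J * ((∑ᶠ μ : Fin n → ℕ, (((∏ t, cpt α β t ^ μ t).re : ℝ) : Quaternion ℝ) * a μ) *
        (∑ᶠ ν : Fin n → ℕ, (((∏ t, cpt α β t ^ ν t).im : ℝ) : Quaternion ℝ) * b ν) +
      (∑ᶠ μ : Fin n → ℕ, (((∏ t, cpt α β t ^ μ t).im : ℝ) : Quaternion ℝ) * a μ) *
        (∑ᶠ ν : Fin n → ℕ, (((∏ t, cpt α β t ^ ν t).re : ℝ) : Quaternion ℝ) * b ν))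
    = ∑ᶠ γ : Fin n → ℕ, (List.ofFn (fun t => qpt α β J t ^ γ t)).prod *
        (∑ᶠ (μ : Fin n → ℕ) (ν : Fin n → ℕ) (_ : μ + ν = γ), a μ * b ν) := by
  classical
  have hJ' : J * J = -1 := hJ
  set φ : ℂ →ₐ[ℝ] Quaternion ℝ := Complex.lift ⟨J, hJ'⟩ with hφdef
  have hφ : ∀ z : ℂ, φ z = ((z.re : ℝ) : Quaternion ℝ) + ((z.im : ℝ) : Quaternion ℝ) * J := by
    intro z
    rw [hφdef, Complex.lift, Equiv.coe_fn_mk, Complex.liftAux_apply]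
    simp [Quaternion.algebraMap_def, Quaternion.coe_mul_eq_smul]
  -- notation
  set f : (Fin n → ℕ) → ℂ := fun μ => ∏ t, cpt α β t ^ μ t with hf
  have hfadd : ∀ μ ν, f (μ + ν) = f μ * f ν := by
    intro μ ν
    simp only [hf, Pi.add_apply, pow_add, Finset.prod_mul_distrib]
  have hqpt : ∀ γ : Fin n → ℕ,
      (List.ofFn (fun t => qpt α β J t ^ γ t)).prod = φ (f γ) := by
    intro γ
    have h1 : ∀ t, qpt α β J t = φ (cpt α β t) := by
      intro t
      rw [hφ]
      simp [qpt, cpt]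
    have : (fun t => qpt α β J t ^ γ t) = (fun t => φ (cpt α β t ^ γ t)) := by
      funext t; rw [h1, map_pow]
    rw [this]
    have : List.ofFn (fun t => φ (cpt α β t ^ γ t))
        = (List.ofFn (fun t => cpt α β t ^ γ t)).map φ := by
      rw [List.map_ofFn]; rfl
    rw [this, ← map_list_prod φ, List.prod_ofFn]
  set Sa := ha.toFinset with hSa
  set Sb := hb.toFinset with hSb
  -- LHS finsums to finite sums
  have hreA : (∑ᶠ μ : Fin n → ℕ, (((f μ).re : ℝ) : Quaternion ℝ) * a μ)
      = ∑ μ ∈ Sa, (((f μ).re : ℝ) : Quaternion ℝ) * a μ := by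
    apply finsum_eq_sum_of_support_subset
    intro μ hμ
    simp only [Function.mem_support] at hμ
    simp only [hSa, Set.Finite.coe_toFinset, Function.mem_support]
    intro h; apply hμ; rw [h, mul_zero]
  have himA : (∑ᶠ μ : Fin n → ℕ, (((f μ).im : ℝ) : Quaternion ℝ) * a μ)
      = ∑ μ ∈ Sa, (((f μ).im : ℝ) : Quaternion ℝ) * a μ := by
    apply finsum_eq_sum_of_support_subset
    intro μ hμ
    simp only [Function.mem_support] at hμ
    simp only [hSa, Set.Finite.coe_toFinset, Function.mem_support]
    intro h; apply hμ; rw [h, mul_zero]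
  have hreB : (∑ᶠ ν : Fin n → ℕ, (((f ν).re : ℝ) : Quaternion ℝ) * b ν)
      = ∑ ν ∈ Sb, (((f ν).re : ℝ) : Quaternion ℝ) * b ν := by
    apply finsum_eq_sum_of_support_subset
    intro ν hν
    simp only [Function.mem_support] at hν
    simp only [hSb, Set.Finite.coe_toFinset, Function.mem_support]
    intro h; apply hν; rw [h, mul_zero]
  have himB : (∑ᶠ ν : Fin n → ℕ, (((f ν).im : ℝ) : Quaternion ℝ) * b ν)
      = ∑ ν ∈ Sb, (((f ν).im : ℝ) : Quaternion ℝ) * b ν := by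
    apply finsum_eq_sum_of_support_subset
    intro ν hν
    simp only [Function.mem_support] at hν
    simp only [hSb, Set.Finite.coe_toFinset, Function.mem_support]
    intro h; apply hν; rw [h, mul_zero]
  rw [hreA, himA, hreB, himB]
  -- RHS: inner coefficient
  have hc : ∀ γ : Fin n → ℕ,
      (∑ᶠ (μ : Fin n → ℕ) (ν : Fin n → ℕ) (_ : μ + ν = γ), a μ * b ν)
      = ∑ μ ∈ Sa, ∑ ν ∈ Sb, if μ + ν = γ then a μ * b ν else 0 := by
    intro γ
    have hinner : ∀ μ, (∑ᶠ (ν : Fin n → ℕ) (_ : μ + ν = γ), a μ * b ν)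
        = ∑ ν ∈ Sb, if μ + ν = γ then a μ * b ν else 0 := by
      intro μ
      have : ∀ ν, (∑ᶠ (_ : μ + ν = γ), a μ * b ν) = if μ + ν = γ then a μ * b ν else 0 :=
        fun ν => finsum_eq_if
      rw [finsum_congr this]
      apply finsum_eq_sum_of_support_subset
      intro ν hν
      simp only [Function.mem_support] at hν
      simp only [hSb, Set.Finite.coe_toFinset, Function.mem_support]
      intro h; apply hν; simp [h]
    rw [finsum_congr hinner]
    apply finsum_eq_sum_of_support_subset
    intro μ hμ
    simp only [Function.mem_support] at hμ
    simp only [hSa, Set.Finite.coe_toFinset, Function.mem_support]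
    intro h
    apply hμ
    apply Finset.sum_eq_zero
    intro ν _
    rw [h, zero_mul, ite_self]
  have hRHS : (∑ᶠ γ : Fin n → ℕ, (List.ofFn (fun t => qpt α β J t ^ γ t)).prod *
        (∑ᶠ (μ : Fin n → ℕ) (ν : Fin n → ℕ) (_ : μ + ν = γ), a μ * b ν))
      = ∑ γ ∈ Sa + Sb, φ (f γ) * (∑ μ ∈ Sa, ∑ ν ∈ Sb, if μ + ν = γ then a μ * b ν else 0) := by
    have heq : ∀ γ, (List.ofFn (fun t => qpt α β J t ^ γ t)).prod *
        (∑ᶠ (μ : Fin n → ℕ) (ν : Fin n → ℕ) (_ : μ + ν = γ), a μ * b ν)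
        = φ (f γ) * (∑ μ ∈ Sa, ∑ ν ∈ Sb, if μ + ν = γ then a μ * b ν else 0) := by
      intro γ; rw [hqpt, hc]
    rw [finsum_congr heq]
    apply finsum_eq_sum_of_support_subset
    intro γ hγ
    simp only [Function.mem_support] at hγ
    simp only [Finset.coe_add, Set.mem_add, Finset.mem_coe]
    by_contra hmem
    push_neg at hmem
    apply hγ
    have : (∑ μ ∈ Sa, ∑ ν ∈ Sb, if μ + ν = γ then a μ * b ν else 0) = 0 := by
      apply Finset.sum_eq_zero; intro μ hμ
      apply Finset.sum_eq_zero; intro ν hν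
      rw [if_neg]
      exact fun h => hmem μ hμ ν hν h
    rw [this, mul_zero]
  rw [hRHS]
  -- swap sums on RHS
  have hRHS2 : (∑ γ ∈ Sa + Sb, φ (f γ) *
        (∑ μ ∈ Sa, ∑ ν ∈ Sb, if μ + ν = γ then a μ * b ν else 0))
      = ∑ μ ∈ Sa, ∑ ν ∈ Sb, φ (f (μ + ν)) * (a μ * b ν) := by
    simp_rw [Finset.mul_sum, mul_ite, mul_zero]
    rw [Finset.sum_comm]
    refine Finset.sum_congr rfl fun μ hμ => ?_
    rw [Finset.sum_comm]
    refine Finset.sum_congr rfl fun ν hν => ?_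
    rw [Finset.sum_ite_eq (Sa + Sb) (μ + ν) (fun γ => φ (f γ) * (a μ * b ν)),
      if_pos (Finset.add_mem_add hμ hν)]
  rw [hRHS2]
  -- LHS: expand products of sums
  rw [Finset.sum_mul_sum, Finset.sum_mul_sum, Finset.sum_mul_sum, Finset.sum_mul_sum]
  rw [← Finset.sum_sub_distrib, ← Finset.sum_add_distrib, Finset.mul_sum, ← Finset.sum_add_distrib]
  refine Finset.sum_congr rfl fun μ _ => ?_
  rw [← Finset.sum_sub_distrib, ← Finset.sum_add_distrib, Finset.mul_sum, ← Finset.sum_add_distrib]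
  refine Finset.sum_congr rfl fun ν _ => ?_
  -- pointwise identity
  rw [hfadd, hφ]
  have hre : (f μ * f ν).re = (f μ).re * (f ν).re - (f μ).im * (f ν).im := Complex.mul_re _ _
  have him : (f μ * f ν).im = (f μ).re * (f ν).im + (f μ).im * (f ν).re := Complex.mul_im _ _
  rw [hre, him]
  simp only [Quaternion.coe_mul_eq_smul, smul_mul_smul_comm, mul_add, add_mul,
    mul_smul_comm, smul_mul_assoc]
  module
end

section
/- Structure of the zero set on spheres: Let f = I(F) be a slice function on Ω_D, let α, β ∈ ℝⁿ with α + iβ ∈ D, and set 𝕊_x := {α + βI : I ∈ 𝕊} (for x = α + βJ). Then exactly one of the following holds: (1) 𝕊_x contains no zero of f; (2) 𝕊_x consists entirely of zeros of f; (3) 𝕊_x contains exactly one zero of f, and that zero does not lie in ℝⁿ ⊆ ℍⁿ. -/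
/-!
Proof idea: on the sphere `𝕊_x`, with `z = α + iβ`, the slice function is the affine map
`I ↦ F₁ z + I F₂ z`. If `F₂ z = 0` it is constant, giving (1) or (2). Otherwise it vanishes
exactly at `I = -F₁ z (F₂ z)⁻¹`, so there is at most one zero; and the point is not real,
since `β = 0` would make `z` conjugation-invariant and force `F₂ z = -F₂ z = 0`.
The alternatives exclude each other because `𝕊` is nonempty and, for `β ≠ 0`, the sphere
`𝕊_x` contains the two distinct points `α + βI` and `α - βI`.
-/

open scoped Quaternion

instance {R : Type*} [Field R] [CharZero R] : IsAddTorsionFree ℍ[R] := .of_isTorsionFree R ℍ[R]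

lemma Quaternion.coe_ne_zero {s : ℝ} (hs : s ≠ 0) : (s : ℍ[ℝ]) ≠ 0 :=
  (Quaternion.coe_injective.ne_iff' Quaternion.coe_zero).mpr hs

lemma mem_Sphere_iff {I : ℍ[ℝ]} : I ∈ Sphere ↔ I * I = -1 := Iff.rfl

lemma Sphere_nonempty : Sphere.Nonempty := by
  refine ⟨⟨0, 1, 0, 0⟩, ?_⟩
  show (⟨0, 1, 0, 0⟩ : ℍ[ℝ]) * ⟨0, 1, 0, 0⟩ = -1
  ext <;> simp

lemma neg_mem_Sphere_s10 {I : ℍ[ℝ]} (hI : I ∈ Sphere) : -I ∈ Sphere := by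
  rw [mem_Sphere_iff, neg_mul_neg]
  exact hI

lemma coe_notMem_Sphere (s : ℝ) : (s : ℍ[ℝ]) ∉ Sphere := by
  intro h
  rw [mem_Sphere_iff, ← Quaternion.coe_mul, ← Quaternion.coe_one, ← Quaternion.coe_neg] at h
  nlinarith [Quaternion.coe_injective h]

lemma add_mul_eq_zero_iff {K : Type*} [DivisionRing K] {a b : K} (hb : b ≠ 0) (x : K) :
    a + x * b = 0 ↔ x = -a * b⁻¹ := by
  rw [add_eq_zero_iff_eq_neg', eq_mul_inv_iff_mul_eq₀ hb]

section Points

variable {n : ℕ}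

def IsRealPoint (x : Fin n → ℍ[ℝ]) : Prop := ∃ r : Fin n → ℝ, x = fun t => (r t : ℍ[ℝ])

lemma conjPt_cpt (α β : Fin n → ℝ) : conjPt (cpt α β) = cpt α (-β) := by
  funext t
  simp [conjPt, cpt]

lemma qpt_injective {α β : Fin n → ℝ} (hβ : β ≠ 0) : Function.Injective (qpt α β) := by
  intro I K h
  obtain ⟨t, ht⟩ : ∃ t, β t ≠ 0 := Function.ne_iff.mp hβ
  exact mul_left_cancel₀ (Quaternion.coe_ne_zero ht) (add_left_cancel (congrFun h t))

lemma isRealPoint_qpt_iff {α β : Fin n → ℝ} {I : ℍ[ℝ]} (hI : I ∈ Sphere) :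
    IsRealPoint (qpt α β I) ↔ β = 0 := by
  constructor
  · rintro ⟨r, hr⟩
    by_contra hβ
    obtain ⟨t, ht⟩ : ∃ t, β t ≠ 0 := Function.ne_iff.mp hβ
    have hβI : (β t : ℍ[ℝ]) * I = ((r t - α t : ℝ) : ℍ[ℝ]) := by
      rw [Quaternion.coe_sub, eq_sub_iff_add_eq']
      exact congrFun hr t
    have hI_real : I = (((β t)⁻¹ * (r t - α t) : ℝ) : ℍ[ℝ]) := by
      rw [Quaternion.coe_mul, Quaternion.coe_inv, ← hβI, ← mul_assoc,
        inv_mul_cancel₀ (Quaternion.coe_ne_zero ht), one_mul]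
    exact coe_notMem_Sphere _ (hI_real ▸ hI)
  · rintro rfl
    exact ⟨α, funext fun t => by simp [qpt]⟩

end Points

section Alternatives

variable {n : ℕ} (g : (Fin n → ℍ[ℝ]) → ℍ[ℝ]) (α β : Fin n → ℝ)

def ZeroFreeOnSphere : Prop := ∀ I ∈ Sphere, g (qpt α β I) ≠ 0

def VanishesOnSphere : Prop := ∀ I ∈ Sphere, g (qpt α β I) = 0

def HasUniqueNonrealZeroOnSphere : Prop :=
  ∃ I ∈ Sphere, g (qpt α β I) = 0 ∧
    (∀ K ∈ Sphere, g (qpt α β K) = 0 → qpt α β K = qpt α β I) ∧ ¬ IsRealPoint (qpt α β I)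

variable {g α β}

lemma not_zeroFreeOnSphere_and_vanishesOnSphere :
    ¬ (ZeroFreeOnSphere g α β ∧ VanishesOnSphere g α β) := by
  rintro ⟨hfree, hvan⟩
  obtain ⟨I, hI⟩ := Sphere_nonempty
  exact hfree I hI (hvan I hI)

lemma not_zeroFreeOnSphere_and_hasUniqueNonrealZeroOnSphere :
    ¬ (ZeroFreeOnSphere g α β ∧ HasUniqueNonrealZeroOnSphere g α β) := by
  rintro ⟨hfree, I, hI, hzero, -⟩
  exact hfree I hI hzero

lemma not_vanishesOnSphere_and_hasUniqueNonrealZeroOnSphere :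
    ¬ (VanishesOnSphere g α β ∧ HasUniqueNonrealZeroOnSphere g α β) := by
  rintro ⟨hvan, I, hI, -, huniq, hnonreal⟩
  have hβ : β ≠ 0 := fun hβ => hnonreal ((isRealPoint_qpt_iff hI).mpr hβ)
  have hneg : -I = I :=
    qpt_injective hβ (huniq (-I) (neg_mem_Sphere_s10 hI) (hvan (-I) (neg_mem_Sphere_s10 hI)))
  have hI0 : I = 0 := self_eq_neg.mp hneg.symm
  exact coe_notMem_Sphere 0 (by simpa [hI0] using hI)

lemma zeroFree_or_vanishes_or_hasUniqueNonrealZero_of_affine {a b : ℍ[ℝ]}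
    (hg : ∀ I ∈ Sphere, g (qpt α β I) = a + I * b) (hb : β = 0 → b = 0) :
    ZeroFreeOnSphere g α β ∨ VanishesOnSphere g α β ∨ HasUniqueNonrealZeroOnSphere g α β := by
  by_cases hb0 : b = 0
  · have hconst : ∀ I ∈ Sphere, g (qpt α β I) = a := fun I hI => by simp [hg I hI, hb0]
    by_cases ha : a = 0
    · exact .inr (.inl fun I hI => (hconst I hI).trans ha)
    · exact .inl fun I hI => (hconst I hI).trans_ne ha
  have hzero : ∀ I ∈ Sphere, g (qpt α β I) = 0 ↔ I = -a * b⁻¹ := fun I hI => by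
    rw [hg I hI, add_mul_eq_zero_iff hb0]
  by_cases hI₀ : -a * b⁻¹ ∈ Sphere
  · refine .inr (.inr ⟨_, hI₀, (hzero _ hI₀).mpr rfl,
      fun K hK hKzero => by rw [(hzero K hK).mp hKzero], ?_⟩)
    rw [isRealPoint_qpt_iff hI₀]
    exact fun hβ => hb0 (hb hβ)
  · exact .inl fun I hI hIzero => hI₀ ((hzero I hI).mp hIzero ▸ hI)

end Alternatives

lemma eq_zero_of_conjPt_eq_self {n : ℕ} {D : Set (Fin n → ℂ)} {F : (Fin n → ℂ) → ℍ[ℝ]}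
    (hF : ∀ z ∈ D, F (conjPt z) = -F z) {z : Fin n → ℂ} (hz : z ∈ D) (hfix : conjPt z = z) :
    F z = 0 := by
  have h := hF z hz
  rwa [hfix, self_eq_neg] at h

theorem zero_set_structure_on_sphere_general {n : ℕ}
    (D : Set (Fin n → ℂ))
    (F₁ F₂ : (Fin n → ℂ) → Quaternion ℝ)
    (hF₂ : ∀ z ∈ D, F₂ (conjPt z) = - F₂ z)
    (f : (Fin n → Quaternion ℝ) → Quaternion ℝ)
    (hf : ∀ J ∈ Sphere, ∀ α β : Fin n → ℝ, cpt α β ∈ D →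
      f (qpt α β J) = F₁ (cpt α β) + J * F₂ (cpt α β))
    (α β : Fin n → ℝ) (hz : cpt α β ∈ D) :
    ((∀ I ∈ Sphere, f (qpt α β I) ≠ 0) ∨
     (∀ I ∈ Sphere, f (qpt α β I) = 0) ∨
     (∃ I ∈ Sphere, f (qpt α β I) = 0 ∧
        (∀ K ∈ Sphere, f (qpt α β K) = 0 → qpt α β K = qpt α β I) ∧
        ¬ ∃ r : Fin n → ℝ, qpt α β I = fun t => ((r t : ℝ) : Quaternion ℝ))) ∧
    ¬ ((∀ I ∈ Sphere, f (qpt α β I) ≠ 0) ∧ (∀ I ∈ Sphere, f (qpt α β I) = 0)) ∧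
    ¬ ((∀ I ∈ Sphere, f (qpt α β I) ≠ 0) ∧
        (∃ I ∈ Sphere, f (qpt α β I) = 0 ∧
          (∀ K ∈ Sphere, f (qpt α β K) = 0 → qpt α β K = qpt α β I) ∧
          ¬ ∃ r : Fin n → ℝ, qpt α β I = fun t => ((r t : ℝ) : Quaternion ℝ))) ∧
    ¬ ((∀ I ∈ Sphere, f (qpt α β I) = 0) ∧
        (∃ I ∈ Sphere, f (qpt α β I) = 0 ∧
          (∀ K ∈ Sphere, f (qpt α β K) = 0 → qpt α β K = qpt α β I) ∧
          ¬ ∃ r : Fin n → ℝ, qpt α β I = fun t => ((r t : ℝ) : Quaternion ℝ))) := by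
  have hF₂_real : β = 0 → F₂ (cpt α β) = 0 := by
    rintro rfl
    exact eq_zero_of_conjPt_eq_self hF₂ hz (by rw [conjPt_cpt, neg_zero])
  exact ⟨zeroFree_or_vanishes_or_hasUniqueNonrealZero_of_affine
      (fun I hI => hf I hI α β hz) hF₂_real,
    not_zeroFreeOnSphere_and_vanishesOnSphere,
    not_zeroFreeOnSphere_and_hasUniqueNonrealZeroOnSphere,
    not_vanishesOnSphere_and_hasUniqueNonrealZeroOnSphere⟩

/-- Structure of the zero set of a slice function on a sphere `𝕊_x`: exactly one of the
following holds: no zeros on the sphere; the whole sphere consists of zeros; or the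
sphere contains exactly one zero, and that zero is not real. -/
theorem zero_set_structure_on_sphere {n : ℕ}
    (D : Set (Fin n → ℂ)) (hD : IsOpen D)
    (hDconj : ∀ z ∈ D, conjPt z ∈ D)
    (F₁ F₂ : (Fin n → ℂ) → Quaternion ℝ)
    (hF₁ : ∀ z ∈ D, F₁ (conjPt z) = F₁ z)
    (hF₂ : ∀ z ∈ D, F₂ (conjPt z) = - F₂ z)
    (f : (Fin n → Quaternion ℝ) → Quaternion ℝ)
    (hf : ∀ J ∈ Sphere, ∀ α β : Fin n → ℝ, cpt α β ∈ D →
      f (qpt α β J) = F₁ (cpt α β) + J * F₂ (cpt α β))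
    (α β : Fin n → ℝ) (hz : cpt α β ∈ D) :
    ((∀ I ∈ Sphere, f (qpt α β I) ≠ 0) ∨
     (∀ I ∈ Sphere, f (qpt α β I) = 0) ∨
     (∃ I ∈ Sphere, f (qpt α β I) = 0 ∧
        (∀ K ∈ Sphere, f (qpt α β K) = 0 → qpt α β K = qpt α β I) ∧
        ¬ ∃ r : Fin n → ℝ, qpt α β I = fun t => ((r t : ℝ) : Quaternion ℝ))) ∧
    ¬ ((∀ I ∈ Sphere, f (qpt α β I) ≠ 0) ∧ (∀ I ∈ Sphere, f (qpt α β I) = 0)) ∧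
    ¬ ((∀ I ∈ Sphere, f (qpt α β I) ≠ 0) ∧
        (∃ I ∈ Sphere, f (qpt α β I) = 0 ∧
          (∀ K ∈ Sphere, f (qpt α β K) = 0 → qpt α β K = qpt α β I) ∧
          ¬ ∃ r : Fin n → ℝ, qpt α β I = fun t => ((r t : ℝ) : Quaternion ℝ))) ∧
    ¬ ((∀ I ∈ Sphere, f (qpt α β I) = 0) ∧
        (∃ I ∈ Sphere, f (qpt α β I) = 0 ∧
          (∀ K ∈ Sphere, f (qpt α β K) = 0 → qpt α β K = qpt α β I) ∧
          ¬ ∃ r : Fin n → ℝ, qpt α β I = fun t => ((r t : ℝ) : Quaternion ℝ))) :=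
  zero_set_structure_on_sphere_general D F₁ F₂ hF₂ f hf α β hz
end
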